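/- arXiv:1812.02920 — 2 statements merged into one kernel-verified Lean document; each statement's English description precedes it below -/
import Mathlib

section
/- In the Morita context T = (Z_8, Z_8, Z_8, Z_8) with context products given by multiplication in Z_8, the right ideal U = (4Z_8, 4Z_8, Z_8, Z_8) is not a prime right ideal of T. -/
/-- A Morita context `(R,V,W,S)`: rings `R`, `S`, an `(R,S)`-bimodule `V`,
an `(S,R)`-bimodule `W`, and context products `V × W → R`, `W × V → S`
making the `2 × 2` matrix set an associative ring. -/
structure MoritaContext (R S V W : Type*) [Ring R] [Ring S]
    [AddCommGroup V] [AddCommGroup W] : Type _ where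
  smulRV : R → V → V
  smulVS : V → S → V
  smulSW : S → W → W
  smulWR : W → R → W
  mulVW : V → W → R
  mulWV : W → V → S
  smulRV_add : ∀ r v v', smulRV r (v + v') = smulRV r v + smulRV r v'
  add_smulRV : ∀ r r' v, smulRV (r + r') v = smulRV r v + smulRV r' v
  mul_smulRV : ∀ r r' v, smulRV (r * r') v = smulRV r (smulRV r' v)
  one_smulRV : ∀ v, smulRV 1 v = v
  smulVS_add : ∀ v v' s, smulVS (v + v') s = smulVS v s + smulVS v' s
  add_smulVS : ∀ v s s', smulVS v (s + s') = smulVS v s + smulVS v s'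
  mul_smulVS : ∀ v s s', smulVS v (s * s') = smulVS (smulVS v s) s'
  one_smulVS : ∀ v, smulVS v 1 = v
  smul_assocRVS : ∀ r v s, smulVS (smulRV r v) s = smulRV r (smulVS v s)
  smulSW_add : ∀ s w w', smulSW s (w + w') = smulSW s w + smulSW s w'
  add_smulSW : ∀ s s' w, smulSW (s + s') w = smulSW s w + smulSW s' w
  mul_smulSW : ∀ s s' w, smulSW (s * s') w = smulSW s (smulSW s' w)
  one_smulSW : ∀ w, smulSW 1 w = w
  smulWR_add : ∀ w w' r, smulWR (w + w') r = smulWR w r + smulWR w' r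
  add_smulWR : ∀ w r r', smulWR w (r + r') = smulWR w r + smulWR w r'
  mul_smulWR : ∀ w r r', smulWR w (r * r') = smulWR (smulWR w r) r'
  one_smulWR : ∀ w, smulWR w 1 = w
  smul_assocSWR : ∀ s w r, smulWR (smulSW s w) r = smulSW s (smulWR w r)
  mulVW_add_left : ∀ v v' w, mulVW (v + v') w = mulVW v w + mulVW v' w
  mulVW_add_right : ∀ v w w', mulVW v (w + w') = mulVW v w + mulVW v w'
  mulWV_add_left : ∀ w w' v, mulWV (w + w') v = mulWV w v + mulWV w' v
  mulWV_add_right : ∀ w v v', mulWV w (v + v') = mulWV w v + mulWV w v'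
  mulVW_smulR : ∀ r v w, mulVW (smulRV r v) w = r * mulVW v w
  mulVW_smulS : ∀ v s w, mulVW (smulVS v s) w = mulVW v (smulSW s w)
  mulVW_smulWR : ∀ v w r, mulVW v (smulWR w r) = mulVW v w * r
  mulWV_smulS : ∀ s w v, mulWV (smulSW s w) v = s * mulWV w v
  mulWV_smulR : ∀ w r v, mulWV (smulWR w r) v = mulWV w (smulRV r v)
  mulWV_smulVS : ∀ w v s, mulWV w (smulVS v s) = mulWV w v * s
  assocVWV : ∀ v w v', smulRV (mulVW v w) v' = smulVS v (mulWV w v')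
  assocWVW : ∀ w v w', smulSW (mulWV w v) w' = smulWR w (mulVW v w')

namespace MoritaContext

variable {R S V W : Type*} [Ring R] [Ring S] [AddCommGroup V] [AddCommGroup W]
variable (M : MoritaContext R S V W)

/-- The underlying set of the Morita context ring: matrices `((r,v),(w,s))`. -/
def Mat (_ : MoritaContext R S V W) : Type _ := (R × V) × (W × S)

instance : AddCommGroup M.Mat := inferInstanceAs (AddCommGroup ((R × V) × (W × S)))


@[simp] lemma add_fst_fst (a b : M.Mat) : (a + b).1.1 = a.1.1 + b.1.1 := rfl
@[simp] lemma add_fst_snd (a b : M.Mat) : (a + b).1.2 = a.1.2 + b.1.2 := rfl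
@[simp] lemma add_snd_fst (a b : M.Mat) : (a + b).2.1 = a.2.1 + b.2.1 := rfl
@[simp] lemma add_snd_snd (a b : M.Mat) : (a + b).2.2 = a.2.2 + b.2.2 := rfl
@[simp] lemma neg_fst_fst (a : M.Mat) : (-a).1.1 = -a.1.1 := rfl
@[simp] lemma neg_fst_snd (a : M.Mat) : (-a).1.2 = -a.1.2 := rfl
@[simp] lemma neg_snd_fst (a : M.Mat) : (-a).2.1 = -a.2.1 := rfl
@[simp] lemma neg_snd_snd (a : M.Mat) : (-a).2.2 = -a.2.2 := rfl
@[simp] lemma zero_fst_fst : (0 : M.Mat).1.1 = 0 := rfl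
@[simp] lemma zero_fst_snd : (0 : M.Mat).1.2 = 0 := rfl
@[simp] lemma zero_snd_fst : (0 : M.Mat).2.1 = 0 := rfl
@[simp] lemma zero_snd_snd : (0 : M.Mat).2.2 = 0 := rfl

/-- The matrix `((r,v),(w,s))` as an element of the Morita context ring. -/
def mat (r : R) (v : V) (w : W) (s : S) : M.Mat := ((r, v), (w, s))

lemma smulRV_zero (r : R) : M.smulRV r 0 = 0 := by
  have h := M.smulRV_add r 0 0
  rw [add_zero] at h
  exact (add_eq_left.mp h.symm)

lemma zero_smulRV (v : V) : M.smulRV 0 v = 0 := by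
  have h := M.add_smulRV 0 0 v
  rw [add_zero] at h
  exact (add_eq_left.mp h.symm)

lemma smulVS_zero (v : V) : M.smulVS v 0 = 0 := by
  have h := M.add_smulVS v 0 0
  rw [add_zero] at h
  exact (add_eq_left.mp h.symm)

lemma zero_smulVS (s : S) : M.smulVS 0 s = 0 := by
  have h := M.smulVS_add 0 0 s
  rw [add_zero] at h
  exact (add_eq_left.mp h.symm)

lemma smulSW_zero (s : S) : M.smulSW s 0 = 0 := by
  have h := M.smulSW_add s 0 0
  rw [add_zero] at h
  exact (add_eq_left.mp h.symm)

lemma zero_smulSW (w : W) : M.smulSW 0 w = 0 := by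
  have h := M.add_smulSW 0 0 w
  rw [add_zero] at h
  exact (add_eq_left.mp h.symm)

lemma smulWR_zero (w : W) : M.smulWR w 0 = 0 := by
  have h := M.add_smulWR w 0 0
  rw [add_zero] at h
  exact (add_eq_left.mp h.symm)

lemma zero_smulWR (r : R) : M.smulWR 0 r = 0 := by
  have h := M.smulWR_add 0 0 r
  rw [add_zero] at h
  exact (add_eq_left.mp h.symm)

lemma mulVW_zero (v : V) : M.mulVW v 0 = 0 := by
  have h := M.mulVW_add_right v 0 0
  rw [add_zero] at h
  exact (add_eq_left.mp h.symm)

lemma zero_mulVW (w : W) : M.mulVW 0 w = 0 := by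
  have h := M.mulVW_add_left 0 0 w
  rw [add_zero] at h
  exact (add_eq_left.mp h.symm)

lemma mulWV_zero (w : W) : M.mulWV w 0 = 0 := by
  have h := M.mulWV_add_right w 0 0
  rw [add_zero] at h
  exact (add_eq_left.mp h.symm)

lemma zero_mulWV (v : V) : M.mulWV 0 v = 0 := by
  have h := M.mulWV_add_left 0 0 v
  rw [add_zero] at h
  exact (add_eq_left.mp h.symm)


lemma mat_ext {a b : M.Mat} (h1 : a.1.1 = b.1.1) (h2 : a.1.2 = b.1.2)
    (h3 : a.2.1 = b.2.1) (h4 : a.2.2 = b.2.2) : a = b :=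
  Prod.ext (Prod.ext h1 h2) (Prod.ext h3 h4)

/-- Multiplication in the Morita context ring. -/
def matMul (a b : M.Mat) : M.Mat :=
  ((a.1.1 * b.1.1 + M.mulVW a.1.2 b.2.1, M.smulRV a.1.1 b.1.2 + M.smulVS a.1.2 b.2.2),
   (M.smulWR a.2.1 b.1.1 + M.smulSW a.2.2 b.2.1, M.mulWV a.2.1 b.1.2 + a.2.2 * b.2.2))

/-- The ring structure on the Morita context matrices. -/
instance : Ring M.Mat where
  __ := (inferInstance : AddCommGroup M.Mat)
  mul := M.matMul
  one := ((1, 0), (0, 1))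
  left_distrib a b c := by
    show M.matMul a (b + c) = M.matMul a b + M.matMul a c
    refine M.mat_ext ?_ ?_ ?_ ?_ <;>
      simp only [add_fst_fst, add_fst_snd, add_snd_fst, add_snd_snd] <;>
      simp [matMul, M.smulRV_add, M.add_smulVS, M.smulSW_add, M.add_smulWR,
        M.mulVW_add_right, M.mulWV_add_right, mul_add] <;> abel
  right_distrib a b c := by
    show M.matMul (a + b) c = M.matMul a c + M.matMul b c
    refine M.mat_ext ?_ ?_ ?_ ?_ <;>
      simp only [add_fst_fst, add_fst_snd, add_snd_fst, add_snd_snd] <;>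
      simp [matMul, M.add_smulRV, M.smulVS_add, M.add_smulSW, M.smulWR_add,
        M.mulVW_add_left, M.mulWV_add_left, add_mul] <;> abel
  zero_mul a := by
    show M.matMul 0 a = 0
    simp [matMul, M.zero_smulRV, M.zero_smulVS, M.zero_smulSW, M.zero_smulWR,
      M.zero_mulVW, M.zero_mulWV] <;> rfl
  mul_zero a := by
    show M.matMul a 0 = 0
    simp [matMul, M.smulRV_zero, M.smulVS_zero, M.smulSW_zero, M.smulWR_zero,
      M.mulVW_zero, M.mulWV_zero] <;> rfl
  mul_assoc a b c := by
    show M.matMul (M.matMul a b) c = M.matMul a (M.matMul b c)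
    refine M.mat_ext ?_ ?_ ?_ ?_ <;>
      simp [matMul, M.smulRV_add, M.add_smulRV, M.mul_smulRV, M.smulVS_add, M.add_smulVS,
        M.mul_smulVS, M.smul_assocRVS, M.smulSW_add, M.add_smulSW, M.mul_smulSW,
        M.smulWR_add, M.add_smulWR, M.mul_smulWR, M.smul_assocSWR,
        M.mulVW_add_left, M.mulVW_add_right, M.mulWV_add_left, M.mulWV_add_right,
        M.mulVW_smulR, M.mulVW_smulS, M.mulVW_smulWR, M.mulWV_smulS, M.mulWV_smulR,
        M.mulWV_smulVS, M.assocVWV, M.assocWVW, mul_add, add_mul, mul_assoc] <;> abel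
  one_mul a := by
    show M.matMul ((1, 0), (0, 1)) a = a
    simp [matMul, M.one_smulRV, M.one_smulSW, M.zero_smulVS, M.zero_smulWR,
      M.zero_mulVW, M.zero_mulWV] <;> rfl
  mul_one a := by
    show M.matMul a ((1, 0), (0, 1)) = a
    simp [matMul, M.one_smulVS, M.one_smulWR, M.smulRV_zero, M.smulSW_zero,
      M.mulVW_zero, M.mulWV_zero] <;> rfl

/-- The "rectangular" subset `(I, V₁, W₁, J)` of the Morita context ring. -/
def rect (I : Set R) (V₁ : Set V) (W₁ : Set W) (J : Set S) : Set M.Mat :=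
  {t | t.1.1 ∈ I ∧ t.1.2 ∈ V₁ ∧ t.2.1 ∈ W₁ ∧ t.2.2 ∈ J}

end MoritaContext

/-- A subset of a ring is a right ideal. -/
def IsRightIdealSet {A : Type*} [Ring A] (U : Set A) : Prop :=
  (0 : A) ∈ U ∧ (∀ a ∈ U, ∀ b ∈ U, a + b ∈ U) ∧ (∀ a ∈ U, -a ∈ U) ∧
    ∀ a ∈ U, ∀ t : A, a * t ∈ U

/-- A subset of a ring is a two-sided ideal. -/
def IsIdealSet {A : Type*} [Ring A] (U : Set A) : Prop :=
  (0 : A) ∈ U ∧ (∀ a ∈ U, ∀ b ∈ U, a + b ∈ U) ∧ (∀ a ∈ U, -a ∈ U) ∧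
    (∀ a ∈ U, ∀ t : A, a * t ∈ U) ∧ ∀ a ∈ U, ∀ t : A, t * a ∈ U

/-- A proper two-sided ideal `U` is prime if `aAb ⊆ U` implies `a ∈ U` or `b ∈ U`. -/
def IsPrimeIdealSet {A : Type*} [Ring A] (U : Set A) : Prop :=
  IsIdealSet U ∧ U ≠ Set.univ ∧ ∀ a b : A, (∀ x : A, a * x * b ∈ U) → a ∈ U ∨ b ∈ U

/-- A proper two-sided ideal `U` is semiprime if `aAa ⊆ U` implies `a ∈ U`. -/
def IsSemiprimeIdealSet {A : Type*} [Ring A] (U : Set A) : Prop :=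
  IsIdealSet U ∧ U ≠ Set.univ ∧ ∀ a : A, (∀ x : A, a * x * a ∈ U) → a ∈ U

/-- A proper right ideal `U` is prime if `aAb ⊆ U` implies `a ∈ U` or `b ∈ U`. -/
def IsPrimeRightIdealSet {A : Type*} [Ring A] (U : Set A) : Prop :=
  IsRightIdealSet U ∧ U ≠ Set.univ ∧ ∀ a b : A, (∀ x : A, a * x * b ∈ U) → a ∈ U ∨ b ∈ U

/-- The prime radical of a ring: the intersection of all its prime ideals. -/
def primeRadicalSet (A : Type*) [Ring A] : Set A := ⋂₀ {U | IsPrimeIdealSet U}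

/-- A ring `A` is prime if `aAb = 0` implies `a = 0` or `b = 0`. -/
def IsPrimeRing (A : Type*) [Ring A] : Prop :=
  ∀ a b : A, (∀ x : A, a * x * b = 0) → a = 0 ∨ b = 0

/-- A ring `A` is semiprime if `aAa = 0` implies `a = 0`. -/
def IsSemiprimeRing (A : Type*) [Ring A] : Prop :=
  ∀ a : A, (∀ x : A, a * x * a = 0) → a = 0

/-- The Morita context `(A,A,A,A)` over a commutative ring with all products
given by multiplication in `A`. -/
def MoritaContext.ofComm (A : Type*) [CommRing A] : MoritaContext A A A A := by
  refine ⟨(· * ·), (· * ·), (· * ·), (· * ·), (· * ·), (· * ·), ?_, ?_, ?_, ?_, ?_, ?_, ?_, ?_, ?_, ?_, ?_, ?_, ?_, ?_, ?_, ?_, ?_, ?_, ?_, ?_, ?_, ?_, ?_, ?_, ?_, ?_, ?_, ?_, ?_, ?_⟩ <;>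
    intros <;> ring

/-- The Morita context `(A, I, J, A)` over a commutative ring `A` with ideals
`I`, `J`, all products given by multiplication in `A`. -/
def MoritaContext.ofIdeals (A : Type*) [CommRing A] (I J : Ideal A) :
    MoritaContext A A I J := by
  refine ⟨fun r v => ⟨r * v.1, I.mul_mem_left r v.2⟩,
    fun v s => ⟨v.1 * s, I.mul_mem_right s v.2⟩,
    fun s w => ⟨s * w.1, J.mul_mem_left s w.2⟩,
    fun w r => ⟨w.1 * r, J.mul_mem_right r w.2⟩,
    fun v w => v.1 * w.1, fun w v => w.1 * v.1, ?_, ?_, ?_, ?_, ?_, ?_, ?_, ?_, ?_, ?_, ?_, ?_, ?_, ?_, ?_, ?_, ?_, ?_, ?_, ?_, ?_, ?_, ?_, ?_, ?_, ?_, ?_, ?_, ?_, ?_⟩ <;>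
    intros <;> first
      | (apply Subtype.ext; push_cast; ring)
      | (push_cast; ring)


/-
The first row of a matrix in `U` has entries in the ideal `4ℤ₈`, and multiplying on the
right only mixes first-row entries, so `U` is a right ideal. It is not prime because `4ℤ₈`
is not: `a = 2` lies outside it while `a² = 4` lies inside, so for the matrix `e` with `e₁₁ = 2`
and other entries zero, every product `e x e` has only the entry `2 x₁₁ 2 ∈ 4ℤ₈`, yet `e ∉ U`.
-/

namespace MoritaContext

variable {A : Type*} [CommRing A]

lemma ofComm_mul_def (a b : (ofComm A).Mat) :
    a * b = ((a.1.1 * b.1.1 + a.1.2 * b.2.1, a.1.1 * b.1.2 + a.1.2 * b.2.2),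
      (a.2.1 * b.1.1 + a.2.2 * b.2.1, a.2.1 * b.1.2 + a.2.2 * b.2.2)) :=
  rfl

lemma ofComm_isRightIdealSet_rect (I : Ideal A) :
    IsRightIdealSet ((ofComm A).rect I I Set.univ Set.univ) := by
  refine ⟨⟨I.zero_mem, I.zero_mem, trivial, trivial⟩, ?_, ?_, ?_⟩
  · rintro a ⟨ha₁, ha₂, -, -⟩ b ⟨hb₁, hb₂, -, -⟩
    exact ⟨I.add_mem ha₁ hb₁, I.add_mem ha₂ hb₂, trivial, trivial⟩
  · rintro a ⟨ha₁, ha₂, -, -⟩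
    exact ⟨I.neg_mem ha₁, I.neg_mem ha₂, trivial, trivial⟩
  · rintro a ⟨ha₁, ha₂, -, -⟩ t
    rw [ofComm_mul_def]
    exact ⟨I.add_mem (I.mul_mem_right _ ha₁) (I.mul_mem_right _ ha₂),
      I.add_mem (I.mul_mem_right _ ha₁) (I.mul_mem_right _ ha₂), trivial, trivial⟩

lemma ofComm_mat_mul_mul_mat (a : A) (x : (ofComm A).Mat) :
    (ofComm A).mat a 0 0 0 * x * (ofComm A).mat a 0 0 0 =
      (ofComm A).mat (x.1.1 * (a * a)) 0 0 0 := by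
  rw [ofComm_mul_def, ofComm_mul_def]
  simp only [mat]
  congr 2 <;> ring

lemma ofComm_not_isPrimeRightIdealSet_rect {I : Ideal A} {a : A} (ha : a ∉ I)
    (ha_sq : a * a ∈ I) :
    ¬ IsPrimeRightIdealSet ((ofComm A).rect I I Set.univ Set.univ) := by
  rintro ⟨-, -, hprime⟩
  have hsandwich : ∀ x, (ofComm A).mat a 0 0 0 * x * (ofComm A).mat a 0 0 0 ∈
      (ofComm A).rect I I Set.univ Set.univ := fun x => by
    rw [ofComm_mat_mul_mul_mat]
    exact ⟨I.mul_mem_left _ ha_sq, I.zero_mem, trivial, trivial⟩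
  rcases hprime _ _ hsandwich with h | h <;> exact ha h.1

end MoritaContext

/-- Example 2.4: in the Morita context `(ℤ₈,ℤ₈,ℤ₈,ℤ₈)` the right ideal
`U = (4ℤ₈, 4ℤ₈, ℤ₈, ℤ₈)` is not a prime right ideal. -/
theorem stmt3 :
    IsRightIdealSet ((MoritaContext.ofComm (ZMod 8)).rect
      {x : ZMod 8 | ∃ y, x = 4 * y} {x : ZMod 8 | ∃ y, x = 4 * y} Set.univ Set.univ) ∧
    ¬ IsPrimeRightIdealSet ((MoritaContext.ofComm (ZMod 8)).rect
      {x : ZMod 8 | ∃ y, x = 4 * y} {x : ZMod 8 | ∃ y, x = 4 * y} Set.univ Set.univ) := by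
  have hU : {x : ZMod 8 | ∃ y, x = 4 * y} = (Ideal.span {(4 : ZMod 8)} : Set (ZMod 8)) :=
    Set.ext fun _ => Ideal.mem_span_singleton.symm
  rw [hU]
  refine ⟨MoritaContext.ofComm_isRightIdealSet_rect _,
    MoritaContext.ofComm_not_isPrimeRightIdealSet_rect (a := 2) ?_ ?_⟩
  · rw [Ideal.mem_span_singleton]
    decide
  · exact Ideal.mem_span_singleton.mpr (by decide)
end

section
/- Let T = (R,V,W,S) be a Morita context with VW = R and WV = S. If I is a prime ideal of R, J is a prime ideal of S, V_1 = {v ∈ V : vW ⊆ I} = {v ∈ V : Wv ⊆ J}, and W_1 = {w ∈ W : Vw ⊆ I} = {w ∈ W : wV ⊆ J}, then (I,V_1,W_1,J) is a prime ideal of T. -/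
def IsIdealSet.toAddSubgroup {A : Type*} [Ring A] {U : Set A} (hU : IsIdealSet U) :
    AddSubgroup A where
  carrier := U
  zero_mem' := hU.1
  add_mem' ha hb := hU.2.1 _ ha _ hb
  neg_mem' ha := hU.2.2.1 _ ha

theorem AddSubgroup.mem_of_forall_mul_mem_of_closure_eq_top {A : Type*} [Ring A]
    {K : AddSubgroup A} {G : Set A} (hG : AddSubgroup.closure G = ⊤) {a : A}
    (h : ∀ x ∈ G, a * x ∈ K) : a ∈ K := by
  have h1 : (1 : A) ∈ K.comap (AddMonoidHom.mulLeft a) :=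
    (AddSubgroup.closure_le _).mpr (fun x hx => h x hx) (hG ▸ AddSubgroup.mem_top 1)
  simpa using h1

namespace MoritaContext

variable {R S V W : Type*} [Ring R] [Ring S] [AddCommGroup V] [AddCommGroup W]
variable (M : MoritaContext R S V W)

@[simp] lemma mul_fst_fst (a b : M.Mat) : (a * b).1.1 = a.1.1 * b.1.1 + M.mulVW a.1.2 b.2.1 :=
  rfl

@[simp] lemma mul_fst_snd (a b : M.Mat) :
    (a * b).1.2 = M.smulRV a.1.1 b.1.2 + M.smulVS a.1.2 b.2.2 :=
  rfl

@[simp] lemma mat_fst_fst (r : R) (v : V) (w : W) (s : S) : (M.mat r v w s).1.1 = r := rfl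
@[simp] lemma mat_fst_snd (r : R) (v : V) (w : W) (s : S) : (M.mat r v w s).1.2 = v := rfl
@[simp] lemma mat_snd_fst (r : R) (v : V) (w : W) (s : S) : (M.mat r v w s).2.1 = w := rfl
@[simp] lemma mat_snd_snd (r : R) (v : V) (w : W) (s : S) : (M.mat r v w s).2.2 = s := rfl

lemma mul_mat_mul_fst_fst (p q : M.Mat) (r : R) :
    (p * M.mat r 0 0 0 * q).1.1 = p.1.1 * r * q.1.1 := by
  simp [M.mulVW_zero, M.zero_mulVW, M.smulRV_zero, M.smulVS_zero]

lemma rect_ne_univ {I : Set R} (hI : I ≠ Set.univ) (V₁ : Set V) (W₁ : Set W) (J : Set S) :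
    M.rect I V₁ W₁ J ≠ Set.univ := by
  contrapose! hI
  exact Set.eq_univ_of_forall fun r => (hI ▸ Set.mem_univ (M.mat r 0 0 0)).1

def cornerPreimage (I : Set R) : Set M.Mat :=
  {a | ∀ x y : M.Mat, (x * a * y).1.1 ∈ I}

lemma rect_subset_cornerPreimage {I : Set R} {V₁ : Set V} {W₁ : Set W} {J : Set S}
    (hU : IsIdealSet (M.rect I V₁ W₁ J)) : M.rect I V₁ W₁ J ⊆ M.cornerPreimage I :=
  fun a ha x y => (hU.2.2.2.1 _ (hU.2.2.2.2 a ha x) y).1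

lemma cornerPreimage_subset_rect
    (hWV : AddSubgroup.closure {x : S | ∃ (w : W) (v : V), x = M.mulWV w v} = ⊤)
    {I : Set R} {V₁ : Set V} {W₁ : Set W} {J : Set S} (hJ : IsIdealSet J)
    (hV₁ : {v | ∀ w, M.mulVW v w ∈ I} ⊆ V₁) (hW₁ : {w | ∀ v, M.mulVW v w ∈ I} ⊆ W₁)
    (hW₁' : W₁ ⊆ {w | ∀ v, M.mulWV w v ∈ J}) :
    M.cornerPreimage I ⊆ M.rect I V₁ W₁ J := by
  intro a ha
  have h11 : a.1.1 ∈ I := by simpa using ha 1 1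
  have h12 (w : W) : M.mulVW a.1.2 w ∈ I := by
    simpa [M.mulVW_zero] using ha 1 (M.mat 0 0 w 0)
  have h21 (v : V) : M.mulVW v a.2.1 ∈ I := by
    simpa [M.mulVW_zero] using ha (M.mat 0 v 0 0) 1
  have h22 (w : W) (v : V) : a.2.2 * M.mulWV w v ∈ J := by
    have hw : M.smulSW a.2.2 w ∈ W₁ := hW₁ fun v => by
      simpa [M.mulVW_zero, M.zero_smulRV, M.zero_mulVW, M.mulVW_smulS] using
        ha (M.mat 0 v 0 0) (M.mat 0 0 w 0)
    simpa [M.mulWV_smulS] using hW₁' hw v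
  refine ⟨h11, hV₁ h12, hW₁ h21, ?_⟩
  exact AddSubgroup.mem_of_forall_mul_mem_of_closure_eq_top (K := hJ.toAddSubgroup) hWV
    (by rintro _ ⟨w, v, rfl⟩; exact h22 w v)

lemma cornerPreimage_prime {I : Set R}
    (hI : ∀ a b : R, (∀ x : R, a * x * b ∈ I) → a ∈ I ∨ b ∈ I) (a b : M.Mat)
    (hab : ∀ t : M.Mat, a * t * b ∈ M.cornerPreimage I) :
    a ∈ M.cornerPreimage I ∨ b ∈ M.cornerPreimage I := by
  by_contra! h
  simp only [cornerPreimage, Set.mem_ofPred_eq, not_forall] at h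
  obtain ⟨⟨x, y, hxy⟩, x', y', hxy'⟩ := h
  refine (hI _ _ fun r => ?_).elim hxy hxy'
  rw [← mul_mat_mul_fst_fst]
  simpa only [mul_assoc] using hab (y * M.mat r 0 0 0 * x') x y'

end MoritaContext

variable {R S V W : Type*} [Ring R] [Ring S] [AddCommGroup V] [AddCommGroup W]

theorem stmt10_general (M : MoritaContext R S V W)
    (hWV : AddSubgroup.closure {x : S | ∃ (w : W) (v : V), x = M.mulWV w v} = ⊤)
    (I : Set R) (V1 : Set V) (W1 : Set W) (J : Set S)
    (hIdeal : IsIdealSet (M.rect I V1 W1 J))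
    (hI : IsPrimeIdealSet I) (hJ : IsPrimeIdealSet J)
    (hV1 : V1 = {v : V | ∀ w : W, M.mulVW v w ∈ I})
    (hW1 : W1 = {w : W | ∀ v : V, M.mulVW v w ∈ I})
    (hW1' : W1 = {w : W | ∀ v : V, M.mulWV w v ∈ J}) :
    IsPrimeIdealSet (M.rect I V1 W1 J) := by
  have hcorner : M.rect I V1 W1 J = M.cornerPreimage I :=
    (M.rect_subset_cornerPreimage hIdeal).antisymm
      (M.cornerPreimage_subset_rect hWV hJ.1 hV1.symm.subset hW1.symm.subset hW1'.subset)
  refine ⟨hIdeal, M.rect_ne_univ hI.2.1 V1 W1 J, ?_⟩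
  rw [hcorner]
  exact M.cornerPreimage_prime hI.2.2

/-- Theorem 2.7, (2) ⇒ (1): assume `VW = R` and `WV = S`.  If `I`, `J` are
prime ideals of `R`, `S` and `V₁ = {v : vW ⊆ I} = {v : Wv ⊆ J}`,
`W₁ = {w : Vw ⊆ I} = {w : wV ⊆ J}`, then the ideal `(I,V₁,W₁,J)` is a prime
ideal of the Morita context ring. -/
theorem stmt10 (M : MoritaContext R S V W)
    (hVW : AddSubgroup.closure {x : R | ∃ (v : V) (w : W), x = M.mulVW v w} = ⊤)
    (hWV : AddSubgroup.closure {x : S | ∃ (w : W) (v : V), x = M.mulWV w v} = ⊤)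
    (I : Set R) (V1 : Set V) (W1 : Set W) (J : Set S)
    (hIdeal : IsIdealSet (M.rect I V1 W1 J))
    (hI : IsPrimeIdealSet I) (hJ : IsPrimeIdealSet J)
    (hV1 : V1 = {v : V | ∀ w : W, M.mulVW v w ∈ I})
    (hV1' : V1 = {v : V | ∀ w : W, M.mulWV w v ∈ J})
    (hW1 : W1 = {w : W | ∀ v : V, M.mulVW v w ∈ I})
    (hW1' : W1 = {w : W | ∀ v : V, M.mulWV w v ∈ J}) :
    IsPrimeIdealSet (M.rect I V1 W1 J) :=
  stmt10_general M hWV I V1 W1 J hIdeal hI hJ hV1 hW1 hW1'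
end
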